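/- arXiv:1901.07609 — 6 statements merged into one kernel-verified Lean document; each statement's English description precedes it below -/
import Mathlib

section
/- If v and v' are twins in a graph G (i.e., N[v] = N[v']), then for every minimum-size cluster deletion set S of G, v ∈ S if and only if v' ∈ S. -/
def IsClusterGraph {W : Type*} (H : SimpleGraph W) : Prop :=
  ∀ u w : W, H.Reachable u w → u ≠ w → H.Adj u w

def IsCDS {V : Type*} (G : SimpleGraph V) (S : Set V) : Prop :=
  IsClusterGraph (G.induce {x | x ∉ S})

def IsVC {V : Type*} (H : SimpleGraph V) (X : Set V) : Prop :=
  ∀ u w : V, H.Adj u w → u ∈ X ∨ w ∈ X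

/-- The auxiliary graph `H_v`: vertices of `V` carry it, but all edges lie inside
`N(v) ∪ N²(v)`. Between `N(v)` and `N²(v)` it has the edges of `G`; inside `N(v)`
it has the non-edges of `G`; `N²(v)` is independent. -/
def Hv {V : Type*} (G : SimpleGraph V) (v : V) : SimpleGraph V :=
  SimpleGraph.fromRel (fun u u' =>
    (G.Adj v u ∧ G.Adj v u' ∧ ¬ G.Adj u u') ∨
    (G.Adj v u ∧ G.dist v u' = 2 ∧ G.Adj u u'))

/-- `v` together with all its twins (vertices with the same closed neighborhood). -/
def Twins {V : Type*} (G : SimpleGraph V) (v : V) : Set V :=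
  {v' | insert v' (G.neighborSet v') = insert v (G.neighborSet v)}

/-- Delete a vertex `u` from `H` (keeping it as an isolated vertex). -/
def delVert {V : Type*} (H : SimpleGraph V) (u : V) : SimpleGraph V :=
  SimpleGraph.fromRel (fun a b => H.Adj a b ∧ a ≠ u ∧ b ≠ u)

/-!
If `v ∈ S` but its twin `v' ∉ S`, then `S \ {v}` is still a cluster deletion set: in
`G - (S \ {v})` the vertex `v` has the same closed neighbourhood as `v'`, so it simply joins
the clique of `v'`. Hence `S` was not of minimum size.
-/

open Relation

theorem isClusterGraph_iff_reflGen_adj_trans {W : Type*} (H : SimpleGraph W) :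
    IsClusterGraph H ↔
      ∀ ⦃a b c⦄, ReflGen H.Adj a b → ReflGen H.Adj b c → ReflGen H.Adj a c := by
  constructor
  · intro hH a b c hab hbc
    rw [reflGen_iff]
    by_cases hca : c = a
    · exact .inl hca
    · have hreach : H.Reachable a c := (H.reachable_iff_reflTransGen a c).mpr
        (hab.to_reflTransGen.trans hbc.to_reflTransGen)
      exact .inr (hH a c hreach (Ne.symm hca))
  · intro htrans u w huw
    rw [SimpleGraph.reachable_iff_reflTransGen] at huw
    have huw' : ReflGen H.Adj u w := by
      induction huw with
      | refl => rfl
      | tail _ hbc ih => exact htrans ih (.single hbc)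
    intro hne
    exact ((reflGen_iff _ _ _).mp huw').resolve_left hne.symm

theorem isCDS_iff {V : Type*} (G : SimpleGraph V) (S : Set V) :
    IsCDS G S ↔ ∀ a ∉ S, ∀ b ∉ S, ∀ c ∉ S,
      ReflGen G.Adj a b → ReflGen G.Adj b c → ReflGen G.Adj a c := by
  have hinduce (a b : {x | x ∉ S}) :
      ReflGen (G.induce {x | x ∉ S}).Adj a b ↔ ReflGen G.Adj a b := by
    simp only [reflGen_iff, SimpleGraph.induce_adj, Subtype.ext_iff]
  simp only [IsCDS, isClusterGraph_iff_reflGen_adj_trans, hinduce, Subtype.forall,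
    Set.mem_ofPred_eq]

section Twins

variable {V : Type*} {G : SimpleGraph V} {v v' : V}

theorem reflGen_adj_iff_of_twin
    (htwin : insert v (G.neighborSet v) = insert v' (G.neighborSet v')) (x : V) :
    ReflGen G.Adj v x ↔ ReflGen G.Adj v' x := by
  simpa only [reflGen_iff, Set.mem_insert_iff, SimpleGraph.mem_neighborSet]
    using Set.ext_iff.mp htwin x

theorem reflGen_adj_comm {x y : V} : ReflGen G.Adj x y ↔ ReflGen G.Adj y x := by
  simp only [reflGen_iff, eq_comm, G.adj_comm]

theorem reflGen_adj_replace_iff [DecidableEq V]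
    (htwin : insert v (G.neighborSet v) = insert v' (G.neighborSet v')) (x y : V) :
    ReflGen G.Adj (if x = v then v' else x) (if y = v then v' else y) ↔ ReflGen G.Adj x y := by
  by_cases hx : x = v <;> by_cases hy : y = v <;> simp only [hx, hy, ite_true, ite_false]
  · exact ⟨fun _ => .refl, fun _ => .refl⟩
  · exact (reflGen_adj_iff_of_twin htwin y).symm
  · rw [reflGen_adj_comm, ← reflGen_adj_iff_of_twin htwin, reflGen_adj_comm]

theorem isCDS_diff_singleton_of_twin
    (htwin : insert v (G.neighborSet v) = insert v' (G.neighborSet v')) {S : Set V}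
    (hS : IsCDS G S) (hv' : v' ∉ S) : IsCDS G (S \ {v}) := by
  classical
  let σ : V → V := fun x => if x = v then v' else x
  have hσ (x : V) (hx : x ∉ S \ {v}) : σ x ∉ S := by
    by_cases h : x = v
    · simpa [σ, h] using hv'
    · simpa [σ, h] using hx
  rw [isCDS_iff] at hS ⊢
  intro a ha b hb c hc hab hbc
  rw [← reflGen_adj_replace_iff htwin] at hab hbc ⊢
  exact hS _ (hσ a ha) _ (hσ b hb) _ (hσ c hc) hab hbc

end Twins

/-- Twins belong together to every minimum cluster deletion set. -/
theorem stmt1 {V : Type*} [Fintype V] (G : SimpleGraph V) (v v' : V)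
    (htwin : insert v (G.neighborSet v) = insert v' (G.neighborSet v'))
    (S : Set V) (hS : IsCDS G S)
    (hmin : ∀ T : Set V, IsCDS G T → S.ncard ≤ T.ncard) :
    v ∈ S ↔ v' ∈ S := by
  have key (w w' : V) (htw : insert w (G.neighborSet w) = insert w' (G.neighborSet w'))
      (hw : w ∈ S) : w' ∈ S := by
    by_contra hw'
    exact (Set.ncard_sdiff_singleton_lt_of_mem hw).not_ge
      (hmin _ (isCDS_diff_singleton_of_twin htw hS hw'))
  exact ⟨key v v' htwin, key v' v htwin.symm⟩
end

section
/- If v and v' are twins in G, S is a cluster deletion set of G with v ∈ S and v' ∉ S, then S \ {v} is also a cluster deletion set of G. (In particular, no minimum cluster deletion set separates twins.) -/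
/-!
Write `x ~ y` for `y ∈ insert x (G.neighborSet x)`, i.e. `x = y` or `x, y` adjacent. A set `T`
is a cluster deletion set iff `~` is transitive outside `T`, and twins `v, v'` are exactly
vertices with `v ~ x ↔ v' ~ x` for all `x`. Hence the retraction `x ↦ if x = v then v' else x`
preserves and reflects `~`, and it maps the complement of `S \ {v}` into the complement of `S`,
so transitivity of `~` outside `S` transfers to transitivity outside `S \ {v}`.
-/

namespace SimpleGraph

variable {V : Type*} (G : SimpleGraph V)

theorem mem_insert_neighborSet_comm {x y : V} :
    y ∈ insert x (G.neighborSet x) ↔ x ∈ insert y (G.neighborSet y) := by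
  simp only [Set.mem_insert_iff, mem_neighborSet, eq_comm, G.adj_comm]

theorem p3Free_iff_closedNbhd_trans (T : Set V) :
    (∀ a b c : V, a ∉ T → b ∉ T → c ∉ T → G.Adj a b → G.Adj b c → a ≠ c → G.Adj a c) ↔
      ∀ a b c : V, a ∉ T → b ∉ T → c ∉ T → b ∈ insert a (G.neighborSet a) →
        c ∈ insert b (G.neighborSet b) → c ∈ insert a (G.neighborSet a) := by
  simp only [Set.mem_insert_iff, mem_neighborSet]
  constructor
  · rintro h a b c ha hb hc (rfl | hab) (rfl | hbc)
    · exact .inl rfl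
    · exact .inr hbc
    · exact .inr hab
    · rcases eq_or_ne c a with rfl | hac
      · exact .inl rfl
      · exact .inr (h a b c ha hb hc hab hbc hac.symm)
  · intro h a b c ha hb hc hab hbc hac
    exact (h a b c ha hb hc (.inr hab) (.inr hbc)).resolve_left hac.symm

theorem mem_insert_neighborSet_retract [DecidableEq V] {v v' : V}
    (htwin : insert v (G.neighborSet v) = insert v' (G.neighborSet v')) (x y : V) :
    (if y = v then v' else y) ∈
        insert (if x = v then v' else x) (G.neighborSet (if x = v then v' else x)) ↔
      y ∈ insert x (G.neighborSet x) := by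
  have hleft : ∀ x z : V,
      z ∈ insert (if x = v then v' else x) (G.neighborSet (if x = v then v' else x)) ↔
        z ∈ insert x (G.neighborSet x) := by
    intro x z
    split_ifs with hx
    · rw [hx, htwin]
    · rfl
  rw [hleft, G.mem_insert_neighborSet_comm, hleft, G.mem_insert_neighborSet_comm]

end SimpleGraph

theorem stmt2_general {V : Type*} (G : SimpleGraph V) (v v' : V)
    (htwin : insert v (G.neighborSet v) = insert v' (G.neighborSet v'))
    (S : Set V)
    (hS : ∀ a b c : V, a ∉ S → b ∉ S → c ∉ S →
      G.Adj a b → G.Adj b c → a ≠ c → G.Adj a c)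
    (hv' : v' ∉ S) :
    ∀ a b c : V, a ∉ S \ {v} → b ∉ S \ {v} → c ∉ S \ {v} →
      G.Adj a b → G.Adj b c → a ≠ c → G.Adj a c := by
  classical
  rw [G.p3Free_iff_closedNbhd_trans] at hS ⊢
  have hretract : ∀ x, x ∉ S \ {v} → (if x = v then v' else x) ∉ S := by
    intro x hx
    split_ifs with hxv
    · exact hv'
    · simpa [hxv] using hx
  intro a b c ha hb hc hab hbc
  rw [← G.mem_insert_neighborSet_retract htwin] at hab hbc ⊢
  exact hS _ _ _ (hretract a ha) (hretract b hb) (hretract c hc) hab hbc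

/-- If `S` is a cluster deletion set (no induced path on 3 vertices survives),
`v, v'` are twins, `v ∈ S` and `v' ∉ S`, then `S \ {v}` is also a cluster
deletion set. -/
theorem stmt2 {V : Type*} (G : SimpleGraph V) (v v' : V)
    (htwin : insert v (G.neighborSet v) = insert v' (G.neighborSet v'))
    (S : Set V)
    (hS : ∀ a b c : V, a ∉ S → b ∉ S → c ∉ S →
      G.Adj a b → G.Adj b c → a ≠ c → G.Adj a c)
    (hv : v ∈ S) (hv' : v' ∉ S) :
    ∀ a b c : V, a ∉ S \ {v} → b ∉ S \ {v} → c ∉ S \ {v} →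
      G.Adj a b → G.Adj b c → a ≠ c → G.Adj a c :=
  stmt2_general G v v' htwin S hS hv'
end

section
/- A vertex v' ≠ v is an isolated vertex of H_v if and only if v' is a twin of v in G (i.e., N[v] = N[v']). -/
namespace SimpleGraph

variable {V : Type*} {G : SimpleGraph V} {u v v' w : V}

lemma dist_eq_two_iff :
    G.dist u v = 2 ↔ u ≠ v ∧ ¬ G.Adj u v ∧ (G.commonNeighbors u v).Nonempty := by
  rw [dist, ENat.toNat_eq_iff two_ne_zero]
  exact edist_eq_two_iff

lemma dist_eq_two_iff_of_adj (h : G.Adj u v) (hvw : G.Adj v w) :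
    G.dist u w = 2 ↔ u ≠ w ∧ ¬ G.Adj u w := by
  rw [dist_eq_two_iff, ← and_assoc, and_iff_left ⟨v, (mem_commonNeighbors G).2 ⟨h, hvw.symm⟩⟩]

end SimpleGraph

open SimpleGraph

section

variable {V : Type*} {G : SimpleGraph V} {u v v' w : V}

lemma Hv_adj_iff_of_adj (h : G.Adj v v') :
    (Hv G v).Adj v' w ↔ v' ≠ w ∧ ((G.Adj v w ∧ ¬ G.Adj v' w) ∨ (G.dist v w = 2 ∧ G.Adj v' w)) := by
  have hnd : G.dist v v' ≠ 2 := fun hd => (dist_eq_two_iff.1 hd).2.1 h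
  simp only [Hv, fromRel_adj, h, hnd, true_and, false_and, and_false, or_false, G.adj_comm w v']
  tauto

lemma Hv_adj_of_dist_eq_two (hu : G.Adj v u) (hw : G.dist v w = 2) (huw : G.Adj u w) :
    (Hv G v).Adj w u := by
  have hwu : w ≠ u := fun hwu => (dist_eq_two_iff.1 hw).2.1 (hwu ▸ hu)
  simp only [Hv, fromRel_adj]
  exact ⟨hwu, Or.inr (Or.inr ⟨hu, hw, huw⟩)⟩

lemma adj_of_forall_not_Hv_adj (hvert : G.Adj v v' ∨ G.dist v v' = 2)
    (hiso : ∀ w, ¬ (Hv G v).Adj v' w) : G.Adj v v' := by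
  refine hvert.resolve_right fun hd => ?_
  obtain ⟨u, hvu, hv'u⟩ := (dist_eq_two_iff.1 hd).2.2
  exact hiso u (Hv_adj_of_dist_eq_two hvu hd (G.adj_symm hv'u))

lemma adj_of_insert_neighborSet_eq (hne : v' ≠ v)
    (h : insert v' (G.neighborSet v') = insert v (G.neighborSet v)) : G.Adj v v' := by
  have hv : v ∈ insert v' (G.neighborSet v') := h ▸ Set.mem_insert v _
  exact (hv.resolve_left hne.symm).symm

lemma forall_not_Hv_adj_iff_of_adj (h : G.Adj v v') :
    (∀ w, ¬ (Hv G v).Adj v' w) ↔ insert v' (G.neighborSet v') = insert v (G.neighborSet v) := by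
  simp only [Hv_adj_iff_of_adj h, Set.ext_iff, Set.mem_insert_iff, mem_neighborSet]
  refine forall_congr' fun w => ?_
  rcases eq_or_ne w v with rfl | hwv
  · simp [h.symm]
  rcases eq_or_ne w v' with rfl | hwv'
  · simp [h]
  by_cases hv'w : G.Adj v' w
  · simp [dist_eq_two_iff_of_adj h hv'w, hwv, hwv'.symm, hv'w, hwv.symm]
  · simp [hwv, hwv', hwv'.symm, hv'w]

end

/-- A vertex `v' ≠ v` of `H_v` is isolated in `H_v` iff `v'` is a twin of `v`. -/
theorem stmt5 {V : Type*} (G : SimpleGraph V) (v v' : V) (hne : v' ≠ v)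
    (hvert : G.Adj v v' ∨ G.dist v v' = 2) :
    (∀ w : V, ¬ (Hv G v).Adj v' w) ↔
      insert v' (G.neighborSet v') = insert v (G.neighborSet v) := by
  constructor
  · intro hiso
    exact (forall_not_Hv_adj_iff_of_adj (adj_of_forall_not_Hv_adj hvert hiso)).1 hiso
  · intro htw
    exact (forall_not_Hv_adj_iff_of_adj (adj_of_insert_neighborSet_eq hne htw)).2 htw
end

section
/- If X is a vertex cover of H_v, then in the graph G − X, the connected component containing v is a clique. -/
namespace SimpleGraph

variable {W : Type*} {H : SimpleGraph W}

theorem Reachable.mem_of_adj_closed {S : Set W} (hS : ∀ ⦃a b⦄, H.Adj a b → a ∈ S → b ∈ S)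
    {x y : W} (hxy : H.Reachable x y) (hx : x ∈ S) : y ∈ S := by
  rw [reachable_iff_reflTransGen] at hxy
  induction hxy with
  | refl => exact hx
  | tail _ hab ih => exact hS hab ih

theorem dist_eq_two_of_adj_of_adj {u w x : W} (huw : H.Adj u w) (hwx : H.Adj w x)
    (hux : u ≠ x) (hnadj : ¬H.Adj u x) : H.dist u x = 2 := by
  have hreach : H.Reachable u x := huw.reachable.trans hwx.reachable
  have hedist : H.edist u x = 2 := edist_eq_two_iff.mpr ⟨hux, hnadj, ⟨w, huw, hwx.symm⟩⟩
  exact_mod_cast hreach.coe_dist_eq_edist.trans hedist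

end SimpleGraph

section VertexCover

variable {V : Type*} {G : SimpleGraph V} {v a b : V} {X : Set V}

theorem hv_adj_of_not_adj (ha : G.Adj v a) (hb : G.Adj v b) (hab : a ≠ b) (hnadj : ¬G.Adj a b) :
    (Hv G v).Adj a b :=
  ⟨hab, Or.inl (Or.inl ⟨ha, hb, hnadj⟩)⟩

theorem hv_adj_of_dist_eq_two (ha : G.Adj v a) (hb : G.dist v b = 2) (hab : G.Adj a b) :
    (Hv G v).Adj a b :=
  ⟨hab.ne, Or.inl (Or.inr ⟨ha, hb, hab⟩)⟩

theorem IsVC.adj_of_adj_of_adj (hX : IsVC (Hv G v) X) (ha : a ∉ X) (hb : b ∉ X)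
    (hva : G.Adj v a) (hvb : G.Adj v b) (hab : a ≠ b) : G.Adj a b := by
  by_contra hnadj
  exact (hX a b (hv_adj_of_not_adj hva hvb hab hnadj)).elim ha hb

theorem IsVC.eq_or_adj_of_adj_of_adj (hX : IsVC (Hv G v) X) (ha : a ∉ X) (hb : b ∉ X)
    (hva : G.Adj v a) (hab : G.Adj a b) : b = v ∨ G.Adj v b := by
  by_contra! h
  have hdist : G.dist v b = 2 := G.dist_eq_two_of_adj_of_adj hva hab (Ne.symm h.1) h.2
  exact (hX a b (hv_adj_of_dist_eq_two hva hdist hab)).elim ha hb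

/- Leaving the closed neighbourhood of `v` would take an `H_v`-edge from `N(v)` to `N²(v)`
that `X` does not cover. -/
theorem IsVC.eq_or_adj_of_reachable (hX : IsVC (Hv G v) X) (hv : v ∉ X) {u : {x // x ∉ X}}
    (hu : (G.induce {x | x ∉ X}).Reachable ⟨v, hv⟩ u) : u.1 = v ∨ G.Adj v u.1 := by
  refine hu.mem_of_adj_closed (S := {x | x.1 = v ∨ G.Adj v x.1}) ?_ (Or.inl rfl)
  rintro ⟨a, ha⟩ ⟨b, hb⟩ (hab : G.Adj a b) (rfl | hva)
  · exact Or.inr hab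
  · exact hX.eq_or_adj_of_adj_of_adj ha hb hva hab

end VertexCover

/-- If `X` is a vertex cover of `H_v` with `v ∉ X`, then the connected component of
`v` in `G − X` is a clique. -/
theorem stmt6 {V : Type*} (G : SimpleGraph V) (v : V) (X : Set V)
    (hX : IsVC (Hv G v) X) (hv : v ∈ {x : V | x ∉ X}) :
    ∀ u w : {x : V // x ∈ {x : V | x ∉ X}},
      (G.induce {x : V | x ∉ X}).Reachable ⟨v, hv⟩ u →
      (G.induce {x : V | x ∉ X}).Reachable ⟨v, hv⟩ w →
      u ≠ w → G.Adj u.1 w.1 := by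
  intro u w hu hw huw
  have huw' : u.1 ≠ w.1 := Subtype.coe_ne_coe.mpr huw
  rcases hX.eq_or_adj_of_reachable hv hu with hu' | hu' <;>
    rcases hX.eq_or_adj_of_reachable hv hw with hw' | hw'
  · exact absurd (hu'.trans hw'.symm) huw'
  · exact hu' ▸ hw'
  · exact hw' ▸ hu'.symm
  · exact hX.adj_of_adj_of_adj u.2 w.2 hu' hw' huw'
end

section
/- If |Twins(v)| ≥ vc(H_v), where vc(H_v) is the minimum size of a vertex cover of H_v, then there exists a minimum-size cluster deletion set S of G with v ∉ S. -/
/-!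
Take a minimum cluster deletion set `S`; we may assume `v ∈ S`. If some twin `v'` of `v` is
not in `S`, the transposition of `v` and `v'` is an automorphism of `G` (they have the same
closed neighbourhood) and carries `S` to a minimum cluster deletion set avoiding `v`.

Otherwise `Twins(v) ⊆ S`, and we trade `S ∩ N[v]` for a minimum vertex cover `X` of `H_v`:
`S' = (S \ N[v]) ∪ (X \ {v})`. In `G - S'` the surviving part of `N[v]` is a clique (a non-edge
inside `N(v)` is an edge of `H_v`) with no edge to `N²(v)` (such an edge is an edge of `H_v`
too), while the rest of `G - S'` is an induced subgraph of the cluster graph `G - S`. Since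
`|X| ≤ |Twins(v)| ≤ |S ∩ N[v]|`, `S'` is again minimum.
-/

open SimpleGraph

lemma exists_forall_ncard_le {α : Type*} {P : Set α → Prop} (h : ∃ S, P S) :
    ∃ S, P S ∧ ∀ T, P T → S.ncard ≤ T.ncard := by
  obtain ⟨S₀, hS₀⟩ := h
  obtain ⟨S, hS, hcard⟩ := Nat.sInf_mem (s := {n | ∃ S, P S ∧ S.ncard = n}) ⟨_, S₀, hS₀, rfl⟩
  exact ⟨S, hS, fun T hT => hcard ▸ Nat.sInf_le ⟨T, hT, rfl⟩⟩

lemma ncard_sdiff_union_le {α : Type*} [Finite α] {S T N X : Set α} (hTS : T ⊆ S) (hTN : T ⊆ N)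
    (hXT : X.ncard ≤ T.ncard) : ((S \ N) ∪ X).ncard ≤ S.ncard :=
  calc _ ≤ (S \ N).ncard + X.ncard := Set.ncard_union_le _ _
    _ ≤ (S \ T).ncard + X.ncard :=
      Nat.add_le_add_right (Set.ncard_le_ncard (Set.sdiff_subset_sdiff_right hTN)) _
    _ = S.ncard - T.ncard + X.ncard := by rw [Set.ncard_sdiff hTS]
    _ ≤ S.ncard := by have := Set.ncard_le_ncard hTS; omega

section ClusterGraph

variable {W W' : Type*} {H : SimpleGraph W} {H' : SimpleGraph W'}

lemma IsClusterGraph.of_embedding (f : H ↪g H') (h : IsClusterGraph H') :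
    IsClusterGraph H :=
  fun _ _ huw hne => f.map_adj_iff.mp (h _ _ (huw.map f.toHom) (f.injective.ne hne))

lemma SimpleGraph.Reachable.induce_of_closed {s : Set W} {u w : W}
    (hs : ∀ a b, H.Adj a b → a ∈ s → b ∈ s) (h : H.Reachable u w) (hu : u ∈ s) :
    ∃ hw : w ∈ s, (H.induce s).Reachable ⟨u, hu⟩ ⟨w, hw⟩ := by
  obtain ⟨p⟩ := h
  induction p with
  | nil => exact ⟨hu, .rfl⟩
  | cons hadj _ ih =>
    obtain ⟨hw, hr⟩ := ih (hs _ _ hadj hu)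
    exact ⟨hw, (show (H.induce s).Adj ⟨_, hu⟩ ⟨_, _⟩ from hadj).reachable.trans hr⟩

lemma isClusterGraph_of_isClique_of_closed {P : Set W}
    (hP : ∀ a b, H.Adj a b → a ∈ P → b ∈ P) (hclique : H.IsClique P)
    (hrest : IsClusterGraph (H.induce Pᶜ)) : IsClusterGraph H := by
  intro u w huw hne
  by_cases hu : u ∈ P
  · obtain ⟨hw, -⟩ := huw.induce_of_closed hP hu
    exact hclique hu hw hne
  · have hPc : ∀ a b, H.Adj a b → a ∈ Pᶜ → b ∈ Pᶜ :=
      fun a b hab ha hb => ha (hP b a hab.symm hb)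
    obtain ⟨hw, hr⟩ := huw.induce_of_closed hPc hu
    exact hrest _ _ hr (by simpa using hne)

end ClusterGraph

section ClusterDeletion

variable {V V' : Type*} {G : SimpleGraph V} {G' : SimpleGraph V'}

lemma IsCDS.comap (f : G ↪g G') {S : Set V'} (h : IsCDS G' S) : IsCDS G (f ⁻¹' S) :=
  IsClusterGraph.of_embedding
    { toFun := fun x => ⟨f x, x.2⟩
      inj' := fun _ _ hxy => Subtype.ext (f.injective (congrArg Subtype.val hxy))
      map_rel_iff' := f.map_adj_iff } h

end ClusterDeletion

section Twins

variable {V : Type*} {G : SimpleGraph V} {v v' : V}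

lemma twins_subset_closedNbhd : Twins G v ⊆ insert v (G.neighborSet v) :=
  fun v' hv' => hv' ▸ Set.mem_insert v' _

lemma adj_swap_iff_of_mem_twins [DecidableEq V] (h : v' ∈ Twins G v) (a b : V) :
    G.Adj (Equiv.swap v v' a) (Equiv.swap v v' b) ↔ G.Adj a b := by
  have hN : ∀ x, (x = v' ∨ G.Adj v' x) ↔ (x = v ∨ G.Adj v x) := fun x => by
    simpa using Set.ext_iff.mp h x
  simp only [Equiv.swap_apply_def]
  split_ifs <;> subst_vars <;> grind [G.adj_comm, SimpleGraph.irrefl]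

end Twins

section AuxiliaryGraph

variable {V : Type*} {G : SimpleGraph V} {v a b : V}

lemma Hv.adj_of_not_adj (ha : G.Adj v a) (hb : G.Adj v b) (hab : a ≠ b) (h : ¬G.Adj a b) :
    (Hv G v).Adj a b := by
  rw [Hv, fromRel_adj]
  exact ⟨hab, .inl (.inl ⟨ha, hb, h⟩)⟩

lemma Hv.adj_of_adj_of_notMem (ha : G.Adj v a) (hab : G.Adj a b)
    (hb : b ∉ insert v (G.neighborSet v)) : (Hv G v).Adj a b := by
  simp only [Set.mem_insert_iff, mem_neighborSet, not_or] at hb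
  have hdist : G.dist v b = 2 := by
    have : G.edist v b = 2 := edist_eq_two_iff.mpr ⟨Ne.symm hb.1, hb.2, a, ha, hab.symm⟩
    simp [SimpleGraph.dist, this]
  rw [Hv, fromRel_adj]
  exact ⟨hab.ne, .inl (.inr ⟨ha, hdist, hab⟩)⟩

end AuxiliaryGraph

theorem IsCDS.sdiff_closedNbhd_union_of_isVC {V : Type*} {G : SimpleGraph V} {v : V}
    {S X : Set V} (hS : IsCDS G S) (hX : IsVC (Hv G v) X) :
    IsCDS G ((S \ insert v (G.neighborSet v)) ∪ (X \ {v})) := by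
  set N := insert v (G.neighborSet v)
  set S' := (S \ N) ∪ (X \ {v})
  have hcover : ∀ a b, (Hv G v).Adj a b → a ≠ v → b ≠ v → a ∈ S' ∨ b ∈ S' :=
    fun a b hab ha hb => (hX a b hab).imp (fun h => .inr ⟨h, ha⟩) (fun h => .inr ⟨h, hb⟩)
  refine isClusterGraph_of_isClique_of_closed (P := Subtype.val ⁻¹' N) ?_ ?_ ?_
  · rintro ⟨a, haS'⟩ ⟨b, hbS'⟩ hab (rfl | ha : a = v ∨ G.Adj v a)
    · exact Or.inr hab
    by_contra hb
    have hbv : b ≠ v := fun h => hb (.inl h)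
    exact (hcover a b (Hv.adj_of_adj_of_notMem ha hab hb) ha.ne' hbv).elim haS' hbS'
  · rintro ⟨a, haS'⟩ (ha : a = v ∨ G.Adj v a) ⟨b, hbS'⟩ (hb : b = v ∨ G.Adj v b) hne
    have hne' : a ≠ b := fun h => hne (Subtype.ext h)
    rcases ha with rfl | ha
    · exact hb.resolve_left hne'.symm
    rcases hb with rfl | hb
    · exact ha.symm
    by_contra hab
    exact (hcover a b (Hv.adj_of_not_adj ha hb hne' hab) ha.ne' hb.ne').elim haS' hbS'
  · refine IsClusterGraph.of_embedding ?_ hS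
    exact
      { toFun := fun x => ⟨x.1.1, fun hxS => x.1.2 (.inl ⟨hxS, x.2⟩)⟩
        inj' := fun _ _ h => by simpa [Subtype.ext_iff] using h
        map_rel_iff' := Iff.rfl }

/-- If `|Twins(v)| ≥ vc(H_v)` then some minimum cluster deletion set avoids `v`. -/
theorem stmt8 {V : Type*} [Fintype V] (G : SimpleGraph V) (v : V)
    (h : sInf {n : ℕ | ∃ X : Set V, IsVC (Hv G v) X ∧ X.ncard = n} ≤
      (Twins G v).ncard) :
    ∃ S : Set V, IsCDS G S ∧ (∀ T : Set V, IsCDS G T → S.ncard ≤ T.ncard) ∧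
      v ∉ S := by
  classical
  obtain ⟨S, hS, hmin⟩ :=
    exists_forall_ncard_le (P := IsCDS G) ⟨.univ, fun u _ _ _ => absurd trivial u.2⟩
  by_cases hvS : v ∉ S
  · exact ⟨S, hS, hmin, hvS⟩
  by_cases htw : Twins G v ⊆ S
  · obtain ⟨X, hX, hXcard⟩ := Nat.sInf_mem (s := {n | ∃ X, IsVC (Hv G v) X ∧ X.ncard = n})
      ⟨_, .univ, fun _ _ _ => .inl trivial, rfl⟩
    have hcard : ((S \ insert v (G.neighborSet v)) ∪ (X \ {v})).ncard ≤ S.ncard :=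
      ncard_sdiff_union_le htw twins_subset_closedNbhd
        ((Set.ncard_le_ncard Set.sdiff_subset).trans (hXcard ▸ h))
    exact ⟨_, hS.sdiff_closedNbhd_union_of_isVC hX, fun T hT => hcard.trans (hmin T hT),
      by simp⟩
  · obtain ⟨v', hv', hv'S⟩ := Set.not_subset.mp htw
    let σ : G ≃g G := ⟨Equiv.swap v v', adj_swap_iff_of_mem_twins hv' _ _⟩
    have hcard : (σ ⁻¹' S).ncard = S.ncard :=
      Set.ncard_preimage_of_injective_subset_range σ.injective (by simp [σ.surjective.range_eq])
    exact ⟨σ ⁻¹' S, hS.comap σ.toEmbedding, fun T hT => hcard ▸ hmin T hT,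
      by simpa [σ] using hv'S⟩
end

section
/- Let v be a vertex of maximum degree in G and suppose H_v has maximum degree 3, achieved by a vertex u such that H_v − u is a skein (a disjoint union of seagulls—2-stars with center in N(v) and leaves in N²(v)—and isolated vertices) containing at least one seagull. Then a contradiction follows; i.e., no such configuration exists. -/
/-- A seagull in `H` (relative to `G`, `v`): a connected component that is a 2-star
with center `c ∈ N(v)` and leaves `a, b ∈ N²(v)`. -/
def Seagull {V : Type*} (G : SimpleGraph V) (v : V) (H : SimpleGraph V)
    (c a b : V) : Prop :=
  G.Adj v c ∧ G.dist v a = 2 ∧ G.dist v b = 2 ∧ a ≠ b ∧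
    H.neighborSet c = {a, b} ∧ H.neighborSet a = {c} ∧ H.neighborSet b = {c}

/-!
Let `v` have maximum degree and let `c ∈ N(v)` be the centre of a seagull with leaves
`a, b ∈ N²(v)`. Comparing the neighbourhoods of the adjacent vertices `v` and `c`, maximality of
`deg v` says that `c` has no more private neighbours outside `N[v]` than `N(v)` has vertices
outside `N[c]`. The leaves give `c` two private neighbours. On the other hand every
non-neighbour of `c` in `N(v)` other than `u` is an `H_v`-neighbour of `c` in `H_v − u`, hence a
leaf, which is impossible since the leaves lie outside `N(v)`; so there is at most one.
-/

namespace SimpleGraph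

variable {V : Type*} (G : SimpleGraph V)

lemma ncard_neighborSet_eq [Finite V] {x y : V} (hxy : G.Adj x y) :
    (G.neighborSet x).ncard = (G.neighborSet x \ insert y (G.neighborSet y)).ncard +
      (G.neighborSet x ∩ G.neighborSet y).ncard + 1 := by
  have hy : y ∉ G.neighborSet x ∩ G.neighborSet y := fun h => G.loopless.irrefl y h.2
  rw [← Set.ncard_inter_add_ncard_sdiff_eq_ncard (G.neighborSet x) (insert y (G.neighborSet y)),
    Set.inter_insert_of_mem (show y ∈ G.neighborSet x from hxy), Set.ncard_insert_of_notMem hy]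
  omega

lemma ncard_neighborSet_sdiff_le [Finite V] {v c : V}
    (hmax : ∀ w, (G.neighborSet w).ncard ≤ (G.neighborSet v).ncard) (hvc : G.Adj v c) :
    (G.neighborSet c \ insert v (G.neighborSet v)).ncard ≤
      (G.neighborSet v \ insert c (G.neighborSet c)).ncard := by
  have hc := G.ncard_neighborSet_eq hvc.symm
  have hv := G.ncard_neighborSet_eq hvc
  rw [Set.inter_comm] at hv
  have := hmax c
  omega

lemma notMem_insert_neighborSet_of_dist_eq_two {v a : V} (h : G.dist v a = 2) :
    a ∉ insert v (G.neighborSet v) := by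
  rintro (rfl | hva)
  · simp at h
  · rw [mem_neighborSet, ← dist_eq_one_iff_adj] at hva
    omega

end SimpleGraph

open SimpleGraph

section

variable {V : Type*} {G : SimpleGraph V} {v : V}

lemma delVert_adj {H : SimpleGraph V} {u a b : V} :
    (delVert H u).Adj a b ↔ H.Adj a b ∧ a ≠ u ∧ b ≠ u := by
  rw [delVert, fromRel_adj]
  constructor
  · rintro ⟨-, h | ⟨h, hb, ha⟩⟩
    · exact h
    · exact ⟨h.symm, ha, hb⟩
  · intro h
    exact ⟨h.1.ne, Or.inl h⟩

lemma delVert_le (H : SimpleGraph V) (u : V) : delVert H u ≤ H :=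
  fun _ _ h => (delVert_adj.1 h).1

lemma hv_adj_of_not_adj_s9 {c w : V} (hvc : G.Adj v c) (hvw : G.Adj v w) (hcw : c ≠ w)
    (h : ¬ G.Adj c w) : (Hv G v).Adj c w := by
  rw [Hv, fromRel_adj]
  exact ⟨hcw, Or.inl (Or.inl ⟨hvc, hvw, h⟩)⟩

lemma adj_of_hv_adj {c x : V} (hvx : ¬ G.Adj v x) (h : (Hv G v).Adj c x) : G.Adj c x := by
  rw [Hv, fromRel_adj] at h
  obtain ⟨-, (⟨-, hvx', -⟩ | ⟨-, -, hcx⟩) | (⟨hvx', -⟩ | ⟨hvx', -⟩)⟩ := h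
  exacts [absurd hvx' hvx, hcx, absurd hvx' hvx, absurd hvx' hvx]

namespace Seagull

variable {H : SimpleGraph V} {u c a b : V}

lemma adj_left (h : Seagull G v H c a b) : H.Adj c a := by
  change a ∈ H.neighborSet c
  rw [h.2.2.2.2.1]
  exact Set.mem_insert a {b}

lemma adj_right (h : Seagull G v H c a b) : H.Adj c b := by
  change b ∈ H.neighborSet c
  rw [h.2.2.2.2.1]
  exact Set.mem_insert_of_mem a rfl

lemma pair_subset_neighborSet_sdiff (h : Seagull G v H c a b) (hH : H ≤ Hv G v) :
    {a, b} ⊆ G.neighborSet c \ insert v (G.neighborSet v) := by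
  have ha := G.notMem_insert_neighborSet_of_dist_eq_two h.2.1
  have hb := G.notMem_insert_neighborSet_of_dist_eq_two h.2.2.1
  rintro x (rfl | rfl)
  · exact ⟨adj_of_hv_adj (ha <| .inr ·) (hH h.adj_left), ha⟩
  · exact ⟨adj_of_hv_adj (hb <| .inr ·) (hH h.adj_right), hb⟩

lemma neighborSet_sdiff_subset (h : Seagull G v (delVert (Hv G v) u) c a b) :
    G.neighborSet v \ insert c (G.neighborSet c) ⊆ {u} := by
  rintro w ⟨hvw, hw⟩
  by_contra hwu
  have hcu := (delVert_adj.1 h.adj_left).2.1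
  have hcw : (delVert (Hv G v) u).Adj c w :=
    delVert_adj.2 ⟨hv_adj_of_not_adj_s9 h.1 hvw (Ne.symm (hw <| .inl ·)) (hw <| .inr ·), hcu, hwu⟩
  have hw' : w ∈ ({a, b} : Set V) := h.2.2.2.2.1 ▸ hcw
  exact (h.pair_subset_neighborSet_sdiff (delVert_le _ u) hw').2 (.inr hvw)

end Seagull

end

theorem stmt9_general {V : Type*} [Fintype V] (G : SimpleGraph V) (v u : V)
    (hmax : ∀ w : V, (G.neighborSet w).ncard ≤ (G.neighborSet v).ncard)
    (hseagull : ∃ c a b : V, Seagull G v (delVert (Hv G v) u) c a b) :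
    False := by
  obtain ⟨c, a, b, h⟩ := hseagull
  have := calc
    2 = ({a, b} : Set V).ncard := (Set.ncard_pair h.2.2.2.1).symm
    _ ≤ (G.neighborSet c \ insert v (G.neighborSet v)).ncard :=
      Set.ncard_le_ncard (h.pair_subset_neighborSet_sdiff (delVert_le _ u))
    _ ≤ (G.neighborSet v \ insert c (G.neighborSet c)).ncard :=
      G.ncard_neighborSet_sdiff_le hmax h.1
    _ ≤ ({u} : Set V).ncard := Set.ncard_le_ncard h.neighborSet_sdiff_subset
    _ = 1 := Set.ncard_singleton u
  omega

/-- If `v` has maximum degree in `G`, and `u` is a vertex of maximum degree 3 in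
`H_v` such that `H_v − u` is a skein containing at least one seagull, then we get a
contradiction: no such configuration exists. -/
theorem stmt9 {V : Type*} [Fintype V] (G : SimpleGraph V) (v u : V)
    (hmax : ∀ w : V, (G.neighborSet w).ncard ≤ (G.neighborSet v).ncard)
    (hu3 : ((Hv G v).neighborSet u).ncard = 3)
    (humax : ∀ w : V, ((Hv G v).neighborSet w).ncard ≤ 3)
    (hskein : ∀ x : V, x ≠ u →
      (delVert (Hv G v) u).neighborSet x = ∅ ∨
      ∃ c a b : V, Seagull G v (delVert (Hv G v) u) c a b ∧
        (x = c ∨ x = a ∨ x = b))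
    (hseagull : ∃ c a b : V, Seagull G v (delVert (Hv G v) u) c a b) :
    False :=
  stmt9_general G v u hmax hseagull
end
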